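/- The intersection Z_{κ₁} ∩ Z_{κ₂} of the zonotopes of κ₁ (rows (1/3,2/3,0),(0,1/3,2/3),(2/3,0,1/3)) and κ₂ (rows (2/3,1/3,0),(0,2/3,1/3),(1/3,0,2/3)) equals the convex hull of the eight points (0,0,0), (5/6,2/6,2/6), (2/6,5/6,2/6), (2/6,2/6,5/6), (1/6,4/6,4/6), (4/6,1/6,4/6), (4/6,4/6,1/6), (1,1,1). -/

import Mathlib

def IsStochastic {X Y : Type*} [Fintype Y] (κ : Matrix X Y ℝ) : Prop :=
  (∀ x y, 0 ≤ κ x y) ∧ ∀ x, ∑ y, κ x y = 1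

def zonotope {X Y : Type*} [Fintype Y] (κ : Matrix X Y ℝ) : Set (X → ℝ) :=
  {v | ∃ a : Y → ℝ, (∀ y, a y ∈ Set.Icc (0:ℝ) 1) ∧ v = κ.mulVec a}

noncomputable def κ₁ : Matrix (Fin 3) (Fin 3) ℝ :=
  !![1/3, 2/3, 0; 0, 1/3, 2/3; 2/3, 0, 1/3]

noncomputable def κ₂ : Matrix (Fin 3) (Fin 3) ℝ :=
  !![2/3, 1/3, 0; 0, 2/3, 1/3; 1/3, 0, 2/3]

/-!
Both matrices are circulant and row-stochastic, so the intersection and the eight points are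
invariant under the cyclic shift of coordinates and under the point reflection `v ↦ 1 - v`.

The eight points lie in both zonotopes (the preimages under the invertible `κᵢ` lie in the unit
cube), and zonotopes are convex. Conversely, write `v = κ₁ a = κ₂ b`. Of the three products of
cyclically consecutive differences `b₀ - a₂`, `b₁ - a₀`, `b₂ - a₁` one is nonnegative, since the
product of all three is a square. After a cyclic shift the first two have the same sign, and
after the reflection both are nonnegative; then `v` lies in the tetrahedron with vertices `0`,
`(5,2,2)/6`, `(4,4,1)/6`, `1`.
-/

open Set Matrix

section General

variable {X Y : Type*} [Fintype Y]

lemma zonotope_eq_image (κ : Matrix X Y ℝ) : zonotope κ = κ.mulVecLin '' Icc 0 1 := by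
  ext v
  simp [zonotope, ← pi_univ_Icc, eq_comm]

lemma convex_zonotope (κ : Matrix X Y ℝ) : Convex ℝ (zonotope κ) := by
  rw [zonotope_eq_image]
  exact (convex_Icc 0 1).linear_image _

lemma mem_zonotope_of_mul_eq_one [Fintype X] [DecidableEq X] {κ : Matrix X Y ℝ}
    {M : Matrix Y X ℝ} (hM : κ * M = 1) {v : X → ℝ} (hv : ∀ y, (M *ᵥ v) y ∈ Icc 0 1) :
    v ∈ zonotope κ :=
  ⟨M *ᵥ v, hv, by rw [mulVec_mulVec, hM, one_mulVec]⟩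

lemma mulVec_comp_of_submatrix_eq {R : Type*} [NonUnitalNonAssocSemiring R]
    {κ : Matrix Y Y R} {σ : Y ≃ Y} (h : κ.submatrix σ σ = κ) (a : Y → R) :
    κ *ᵥ (a ∘ σ) = (κ *ᵥ a) ∘ σ := by
  simpa [h, Function.comp_assoc] using submatrix_mulVec_equiv κ (a ∘ σ) σ σ

end General

section Convex

variable {E : Type*} [AddCommGroup E] [Module ℝ E] {s : Set E}

lemma Convex.combo_four_mem (hs : Convex ℝ s) {p q r t : E} (hp : p ∈ s) (hq : q ∈ s)
    (hr : r ∈ s) (ht : t ∈ s) {α β γ δ : ℝ} (hα : 0 ≤ α) (hβ : 0 ≤ β) (hγ : 0 ≤ γ)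
    (hδ : 0 ≤ δ) (hsum : α + β + γ + δ = 1) : α • p + β • q + γ • r + δ • t ∈ s := by
  simpa [Fin.sum_univ_four, add_assoc] using
    hs.sum_mem (t := Finset.univ) (w := ![α, β, γ, δ]) (z := ![p, q, r, t])
      (fun i _ => by fin_cases i <;> assumption) (by simp [Fin.sum_univ_four, hsum])
      (fun i _ => by fin_cases i <;> assumption)

lemma Set.MapsTo.convexHull (f : E →ᵃ[ℝ] E) (h : MapsTo f s s) :
    MapsTo f (convexHull ℝ s) (convexHull ℝ s) :=
  convexHull_min (h.mono_right (subset_convexHull ℝ s))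
    ((convex_convexHull ℝ s).affine_preimage f)

end Convex

lemma mul_nonneg_cyclic {R : Type*} [CommRing R] [LinearOrder R] [IsStrictOrderedRing R]
    (x y z : R) : 0 ≤ x * y ∨ 0 ≤ y * z ∨ 0 ≤ z * x := by
  by_contra! h
  nlinarith [sq_nonneg (x * y * z), mul_pos_of_neg_of_neg h.1 h.2.1]

lemma vecCons_comp_finRotate {α : Type*} (x y z : α) : ![x, y, z] ∘ finRotate 3 = ![y, z, x] := by
  ext i; fin_cases i <;> rfl

lemma one_sub_vecCons {α : Type*} [One α] [Sub α] (x y z : α) : 1 - ![x, y, z] = ![1 - x, 1 - y, 1 - z] := by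
  ext i; fin_cases i <;> rfl

lemma κ₁_mulVec (a : Fin 3 → ℝ) :
    κ₁ *ᵥ a = ![1/3 * a 0 + 2/3 * a 1, 1/3 * a 1 + 2/3 * a 2, 2/3 * a 0 + 1/3 * a 2] := by
  ext i; fin_cases i <;> simp [κ₁, mulVec, dotProduct, Fin.sum_univ_three]

lemma κ₂_mulVec (b : Fin 3 → ℝ) :
    κ₂ *ᵥ b = ![2/3 * b 0 + 1/3 * b 1, 2/3 * b 1 + 1/3 * b 2, 1/3 * b 0 + 2/3 * b 2] := by
  ext i; fin_cases i <;> simp [κ₂, mulVec, dotProduct, Fin.sum_univ_three]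

lemma κ₁_mulVec_one : κ₁ *ᵥ 1 = 1 := by
  ext i; fin_cases i <;> norm_num [κ₁_mulVec]

lemma κ₂_mulVec_one : κ₂ *ᵥ 1 = 1 := by
  ext i; fin_cases i <;> norm_num [κ₂_mulVec]

lemma κ₁_submatrix_finRotate : κ₁.submatrix (finRotate 3) (finRotate 3) = κ₁ := by
  ext i j; fin_cases i <;> fin_cases j <;> rfl

lemma κ₂_submatrix_finRotate : κ₂.submatrix (finRotate 3) (finRotate 3) = κ₂ := by
  ext i j; fin_cases i <;> fin_cases j <;> rfl

-- `κ₁ = (I + 2P)/3` and `κ₂ = (2I + P)/3` for the cyclic shift `P`; as `P³ = I`, the inverses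
-- are `(I - 2P + 4P²)/3` and `(4I - 2P + P²)/3`.
noncomputable def κ₁Inv : Matrix (Fin 3) (Fin 3) ℝ :=
  !![1/3, -2/3, 4/3; 4/3, 1/3, -2/3; -2/3, 4/3, 1/3]

noncomputable def κ₂Inv : Matrix (Fin 3) (Fin 3) ℝ :=
  !![4/3, -2/3, 1/3; 1/3, 4/3, -2/3; -2/3, 1/3, 4/3]

lemma κ₁_mul_κ₁Inv : κ₁ * κ₁Inv = 1 := by
  rw [κ₁, κ₁Inv, mul_fin_three, one_fin_three]; norm_num

lemma κ₂_mul_κ₂Inv : κ₂ * κ₂Inv = 1 := by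
  rw [κ₂, κ₂Inv, mul_fin_three, one_fin_three]; norm_num

def vertices : Set (Fin 3 → ℝ) :=
  {![0, 0, 0], ![5/6, 2/6, 2/6], ![2/6, 5/6, 2/6], ![2/6, 2/6, 5/6],
    ![1/6, 4/6, 4/6], ![4/6, 1/6, 4/6], ![4/6, 4/6, 1/6], ![1, 1, 1]}

lemma vertices_subset_inter : vertices ⊆ zonotope κ₁ ∩ zonotope κ₂ := by
  rintro p (rfl | rfl | rfl | rfl | rfl | rfl | rfl | rfl) <;>
    exact ⟨mem_zonotope_of_mul_eq_one κ₁_mul_κ₁Inv fun y => by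
        fin_cases y <;> norm_num [κ₁Inv, mulVec, vec3_dotProduct],
      mem_zonotope_of_mul_eq_one κ₂_mul_κ₂Inv fun y => by
        fin_cases y <;> norm_num [κ₂Inv, mulVec, vec3_dotProduct]⟩

lemma convexHull_vertices_subset_inter :
    convexHull ℝ vertices ⊆ zonotope κ₁ ∩ zonotope κ₂ :=
  convexHull_min vertices_subset_inter ((convex_zonotope κ₁).inter (convex_zonotope κ₂))

lemma mapsTo_comp_finRotate_vertices : MapsTo (· ∘ finRotate 3) vertices vertices := by
  rintro p (rfl | rfl | rfl | rfl | rfl | rfl | rfl | rfl) <;>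
    simp [vertices, vecCons_comp_finRotate]

lemma mapsTo_one_sub_vertices : MapsTo (1 - ·) vertices vertices := by
  rintro p (rfl | rfl | rfl | rfl | rfl | rfl | rfl | rfl) <;>
    simp only [one_sub_vecCons] <;> norm_num [vertices]

lemma mem_convexHull_vertices_of_comp_finRotate {v : Fin 3 → ℝ}
    (hv : v ∘ finRotate 3 ∈ convexHull ℝ vertices) : v ∈ convexHull ℝ vertices := by
  have rotate := mapsTo_comp_finRotate_vertices.convexHull
    (LinearMap.funLeft ℝ ℝ (finRotate 3)).toAffineMap
  have hv₃ : v = ((v ∘ finRotate 3) ∘ finRotate 3) ∘ finRotate 3 := by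
    ext i; fin_cases i <;> rfl
  exact hv₃ ▸ rotate (rotate hv)

lemma one_sub_mem_convexHull_vertices {v : Fin 3 → ℝ} (hv : v ∈ convexHull ℝ vertices) :
    1 - v ∈ convexHull ℝ vertices :=
  mapsTo_one_sub_vertices.convexHull (AffineMap.const ℝ _ 1 - AffineMap.id ℝ _) hv

section Intersection

variable {a b : Fin 3 → ℝ} (ha : ∀ i, a i ∈ Icc 0 1) (hb : ∀ i, b i ∈ Icc 0 1)
  (hab : κ₁ *ᵥ a = κ₂ *ᵥ b)
include ha hb hab

lemma κ₁_mulVec_mem_convexHull_of_le (h₀ : a 2 ≤ b 0) (h₁ : a 0 ≤ b 1) :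
    κ₁ *ᵥ a ∈ convexHull ℝ vertices := by
  rw [κ₁_mulVec, κ₂_mulVec] at hab
  have e₀ : 1/3 * a 0 + 2/3 * a 1 = 2/3 * b 0 + 1/3 * b 1 := congrFun hab 0
  have e₁ : 1/3 * a 1 + 2/3 * a 2 = 2/3 * b 1 + 1/3 * b 2 := congrFun hab 1
  have e₂ : 2/3 * a 0 + 1/3 * a 2 = 1/3 * b 0 + 2/3 * b 2 := congrFun hab 2
  -- The weights sum to `1` because `∑ a = ∑ b`: both matrices are doubly stochastic.
  have hv : κ₁ *ᵥ a = (1 - a 1) • ![0, 0, 0] + (b 0 - a 2) • ![5/6, 2/6, 2/6] +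
      (b 1 - a 0) • ![4/6, 4/6, 1/6] + b 2 • ![1, 1, 1] := by
    simp only [κ₁_mulVec, smul_vec3, vec3_add, smul_eq_mul]
    exact vec3_eq (by linarith) (by linarith) (by linarith)
  have hvert := subset_convexHull ℝ vertices
  rw [hv]
  exact (convex_convexHull ℝ vertices).combo_four_mem (hvert (by simp [vertices]))
    (hvert (by simp [vertices])) (hvert (by simp [vertices])) (hvert (by simp [vertices]))
    (by linarith [(ha 1).2]) (by linarith) (by linarith) (hb 2).1 (by linarith)

lemma κ₁_mulVec_mem_convexHull_of_mul_nonneg (h : 0 ≤ (b 0 - a 2) * (b 1 - a 0)) :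
    κ₁ *ᵥ a ∈ convexHull ℝ vertices := by
  rcases mul_nonneg_iff.1 h with ⟨h₀, h₁⟩ | ⟨h₀, h₁⟩
  · exact κ₁_mulVec_mem_convexHull_of_le ha hb hab (by linarith) (by linarith)
  · have := κ₁_mulVec_mem_convexHull_of_le (a := 1 - a) (b := 1 - b)
      (fun i => Icc.mem_iff_one_sub_mem.1 (ha i)) (fun i => Icc.mem_iff_one_sub_mem.1 (hb i))
      (by rw [mulVec_sub, mulVec_sub, κ₁_mulVec_one, κ₂_mulVec_one, hab])
      (by simp only [Pi.sub_apply, Pi.one_apply]; linarith)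
      (by simp only [Pi.sub_apply, Pi.one_apply]; linarith)
    have := one_sub_mem_convexHull_vertices this
    rwa [mulVec_sub, κ₁_mulVec_one, sub_sub_cancel] at this

end Intersection

lemma κ₁_mulVec_mem_convexHull_of_comp_finRotate {a : Fin 3 → ℝ}
    (h : κ₁ *ᵥ (a ∘ finRotate 3) ∈ convexHull ℝ vertices) : κ₁ *ᵥ a ∈ convexHull ℝ vertices :=
  mem_convexHull_vertices_of_comp_finRotate
    (mulVec_comp_of_submatrix_eq κ₁_submatrix_finRotate a ▸ h)

lemma inter_subset_convexHull_vertices :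
    zonotope κ₁ ∩ zonotope κ₂ ⊆ convexHull ℝ vertices := by
  rintro _ ⟨⟨a, ha, rfl⟩, b, hb, hab⟩
  have rotate {a b : Fin 3 → ℝ} (hab : κ₁ *ᵥ a = κ₂ *ᵥ b) :
      κ₁ *ᵥ (a ∘ finRotate 3) = κ₂ *ᵥ (b ∘ finRotate 3) := by
    rw [mulVec_comp_of_submatrix_eq κ₁_submatrix_finRotate,
      mulVec_comp_of_submatrix_eq κ₂_submatrix_finRotate, hab]
  rcases mul_nonneg_cyclic (b 0 - a 2) (b 1 - a 0) (b 2 - a 1) with h | h | h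
  · exact κ₁_mulVec_mem_convexHull_of_mul_nonneg ha hb hab h
  · exact κ₁_mulVec_mem_convexHull_of_comp_finRotate <|
      κ₁_mulVec_mem_convexHull_of_mul_nonneg (fun _ => ha _) (fun _ => hb _) (rotate hab) h
  · exact κ₁_mulVec_mem_convexHull_of_comp_finRotate <|
      κ₁_mulVec_mem_convexHull_of_comp_finRotate <|
      κ₁_mulVec_mem_convexHull_of_mul_nonneg (b := (b ∘ finRotate 3) ∘ finRotate 3)
        (fun _ => ha _) (fun _ => hb _) (rotate (rotate hab)) h

theorem intersection_eq_convexHull :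
    zonotope κ₁ ∩ zonotope κ₂ =
      convexHull ℝ {(![0, 0, 0] : Fin 3 → ℝ), ![5/6, 2/6, 2/6], ![2/6, 5/6, 2/6],
        ![2/6, 2/6, 5/6], ![1/6, 4/6, 4/6], ![4/6, 1/6, 4/6], ![4/6, 4/6, 1/6],
        ![1, 1, 1]} :=
  Subset.antisymm inter_subset_convexHull_vertices convexHull_vertices_subset_inter
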